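/- Fix y ∈ 𝒴 and subsets b₁(y), …, b_m(y) of b(y). Let φ_y : ℝ_{>0}^{b(y)} → ℝ be the local potential of the composite likelihood, φ_y(g) = −Σ_{ℓ=1}^m log(1 + Σ_{z∈b_ℓ(y)} g_z). If the |b(y)| × m matrix whose columns are the indicator vectors 𝟏_{b₁(y)}, …, 𝟏_{b_m(y)} has rank |b(y)| (equivalently, the indicator vectors span ℝ^{b(y)}), then φ_y is strictly convex on ℝ_{>0}^{b(y)}. -/

import Mathlib

/-!
Each summand `-log (1 + ⟨𝟏_{b_ℓ}, g⟩)` is `-log` composed with an affine map, hence convex.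
Because the indicator vectors span, two distinct points `g ≠ h` are separated by some
functional `⟨𝟏_{b_ℓ}, ·⟩`, and along the segment from `g` to `h` that summand is strictly
convex by strict convexity of `-log`.
-/

open scoped BigOperators

noncomputable def bregman {A : Type*} [Fintype A] [DecidableEq A]
    (φ : (A → ℝ) → ℝ) (f g : A → ℝ) : ℝ :=
  φ f - φ g - ∑ a, fderiv ℝ φ g (Pi.single a 1) * (f a - g a)

def posOrth (A : Type*) : Set (A → ℝ) := {g | ∀ a, 0 < g a}

def probSet (Y : Type*) [Fintype Y] : Set (Y → ℝ) :=
  {p | (∀ y, 0 < p y) ∧ ∑ y, p y = 1}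

noncomputable def DPhi {Y : Type*} [Fintype Y] [DecidableEq Y]
    (G : SimpleGraph Y) [DecidableRel G.Adj] (Y0 : Finset Y)
    (φ : ∀ y : Y, (↥(G.neighborSet y) → ℝ) → ℝ) (f g : Y → ℝ) : ℝ :=
  ∑ y ∈ Y0, f y * bregman (φ y) (fun z => f z.1 / f y) (fun z => g z.1 / g y)

def nbd {Y : Type*} (G : SimpleGraph Y) (y : Y) : Set Y := insert y (G.neighborSet y)

/-- Graph `G₀` on a vertex subset: edges when closed neighborhoods intersect. -/
def overlapGraph {Y : Type*} (G : SimpleGraph Y) (Y0 : Set Y) : SimpleGraph Y0 where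
  Adj a b := a ≠ b ∧ (nbd G a.1 ∩ nbd G b.1).Nonempty
  symm := by
    constructor
    intro a b h
    exact ⟨h.1.symm, by rw [Set.inter_comm]; exact h.2⟩
  loopless := by
    constructor
    intro a h
    exact h.1 rfl

/-- Graph `G₀'` on a vertex subset: edges when open neighborhoods intersect. -/
def bOverlapGraph {Y : Type*} (G : SimpleGraph Y) (Y0 : Set Y) : SimpleGraph Y0 where
  Adj a b := a ≠ b ∧ (G.neighborSet a.1 ∩ G.neighborSet b.1).Nonempty
  symm := by
    constructor
    intro a b h
    exact ⟨h.1.symm, by rw [Set.inter_comm]; exact h.2⟩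
  loopless := by
    constructor
    intro a h
    exact h.1 rfl

noncomputable def psPot (γ : ℝ) {A : Type*} [Fintype A] (f : A → ℝ) : ℝ :=
  (∑ a, f a ^ (1 + γ)) ^ (1 / (1 + γ))

theorem eq_of_forall_dotProduct_eq_of_span_eq_top {ι n R : Type*} [Fintype n] [CommRing R]
    {v : ι → n → R} (hv : Submodule.span R (Set.range v) = ⊤) {x y : n → R}
    (h : ∀ i, v i ⬝ᵥ x = v i ⬝ᵥ y) : x = y := by
  have hxy : (dotProductBilin R R).flip x = (dotProductBilin R R).flip y :=
    LinearMap.ext_on_range hv fun i => by simpa using h i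
  exact dotProduct_eq x y fun u => by
    simpa [dotProduct_comm] using LinearMap.congr_fun hxy u

theorem strictConvexOn_neg_sum_log_one_add {E ι : Type*} [AddCommGroup E] [Module ℝ E]
    [Fintype ι] {s : Set E} (hs : Convex ℝ s) (L : ι → E →ₗ[ℝ] ℝ)
    (hpos : ∀ i, ∀ x ∈ s, 0 < 1 + L i x) (hsep : ∀ x y, (∀ i, L i x = L i y) → x = y) :
    StrictConvexOn ℝ s fun x => -∑ i, Real.log (1 + L i x) := by
  refine ⟨hs, fun x hx y hy hxy a b ha hb hab => ?_⟩
  obtain ⟨i₀, hi₀⟩ : ∃ i, L i x ≠ L i y := by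
    by_contra! h
    exact hxy (hsep x y h)
  have hmid : ∀ i, 1 + L i (a • x + b • y) = a * (1 + L i x) + b * (1 + L i y) := by
    intro i
    simp only [map_add, map_smul, smul_eq_mul]
    linear_combination -hab
  have hle : ∀ i, a * Real.log (1 + L i x) + b * Real.log (1 + L i y)
      ≤ Real.log (1 + L i (a • x + b • y)) := fun i => by
    rw [hmid]
    exact strictConcaveOn_log_Ioi.concaveOn.2 (hpos i x hx) (hpos i y hy) ha.le hb.le hab
  have hlt : a * Real.log (1 + L i₀ x) + b * Real.log (1 + L i₀ y)
      < Real.log (1 + L i₀ (a • x + b • y)) := by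
    rw [hmid]
    exact strictConcaveOn_log_Ioi.2 (hpos i₀ x hx) (hpos i₀ y hy) (by simpa using hi₀) ha hb hab
  have hsum := Finset.sum_lt_sum (fun i _ => hle i) ⟨i₀, Finset.mem_univ _, hlt⟩
  simp only [Finset.sum_add_distrib, ← Finset.mul_sum] at hsum
  simp only [smul_eq_mul]
  linarith

theorem convex_posOrth (A : Type*) : Convex ℝ (posOrth A) := by
  have h : posOrth A = Set.univ.pi fun _ => Set.Ioi 0 := by
    ext g
    simp [posOrth]
  exact h ▸ convex_pi fun _ _ => convex_Ioi 0

theorem stmt5_general {Y : Type*} [Fintype Y] [DecidableEq Y]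
    (G : SimpleGraph Y) [DecidableRel G.Adj] (y : Y)
    (m : ℕ) (c : Fin m → Finset Y)
    (hspan : Submodule.span ℝ
        (Set.range fun ℓ : Fin m =>
          fun z : ↥(G.neighborSet y) => if z.1 ∈ c ℓ then (1 : ℝ) else 0) = ⊤) :
    StrictConvexOn ℝ (posOrth ↥(G.neighborSet y))
      (fun g : ↥(G.neighborSet y) → ℝ =>
        -∑ ℓ : Fin m,
          Real.log (1 + ∑ z : ↥(G.neighborSet y), if z.1 ∈ c ℓ then g z else 0)) := by
  set v : Fin m → ↥(G.neighborSet y) → ℝ := fun ℓ z => if z.1 ∈ c ℓ then 1 else 0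
  have hv_nonneg : ∀ ℓ, 0 ≤ v ℓ := fun ℓ z => by
    simp only [v]
    split_ifs <;> norm_num
  have key := strictConvexOn_neg_sum_log_one_add (convex_posOrth _)
    (fun ℓ => dotProductBilin ℝ ℝ (v ℓ))
    (fun ℓ g hg => by
      have := dotProduct_nonneg_of_nonneg (hv_nonneg ℓ) fun z => (hg z).le
      simp only [dotProductBilin_apply_apply]
      linarith)
    (fun _ _ h => eq_of_forall_dotProduct_eq_of_span_eq_top hspan h)
  refine key.congr fun g _ => ?_
  simp [v, dotProduct, ite_mul]

/-- The local potential of the composite likelihood,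
`φ_y(g) = −Σ_ℓ log(1 + Σ_{z ∈ b_ℓ(y)} g_z)`, is strictly convex on `ℝ_{>0}^{b(y)}`
provided the indicator vectors of `b₁(y), …, b_m(y)` span `ℝ^{b(y)}`. -/
theorem stmt5 {Y : Type*} [Fintype Y] [DecidableEq Y]
    (G : SimpleGraph Y) [DecidableRel G.Adj] (y : Y)
    (m : ℕ) (c : Fin m → Finset Y)
    (hsub : ∀ ℓ, c ℓ ⊆ G.neighborFinset y)
    (hspan : Submodule.span ℝ
        (Set.range fun ℓ : Fin m =>
          fun z : ↥(G.neighborSet y) => if z.1 ∈ c ℓ then (1 : ℝ) else 0) = ⊤) :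
    StrictConvexOn ℝ (posOrth ↥(G.neighborSet y))
      (fun g : ↥(G.neighborSet y) → ℝ =>
        -∑ ℓ : Fin m,
          Real.log (1 + ∑ z : ↥(G.neighborSet y), if z.1 ∈ c ℓ then g z else 0)) :=
  stmt5_general G y m c hspan
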